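/- Suppose the linear operator T : ℝ_n[z] → ℝ[z] maps every hyperbolic polynomial of degree at most n to a hyperbolic polynomial. Then (extending T to ℂ_n[z] by complex linearity) either T maps every stable polynomial of degree at most n to a stable polynomial or to 0, or T maps every stable polynomial of degree at most n into H₁⁻(ℂ) ∪ {0}, or the range of T has dimension at most two and T is of the form T(f) = α(f)P + β(f)Q for all f ∈ ℝ_n[z], where α, β : ℝ_n[z] → ℝ are linear functionals and P, Q are hyperbolic polynomials whose zeros interlace. -/

import Mathlib

open Polynomial

noncomputable section

/-- A univariate complex polynomial is stable if it does not vanish on the open upper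
half-plane. -/
def UStable (f : Polynomial ℂ) : Prop := ∀ z : ℂ, 0 < z.im → f.eval z ≠ 0

/-- A real univariate polynomial is hyperbolic if it is nonzero and all its (complex)
zeros are real. -/
def Hyperbolic (p : Polynomial ℝ) : Prop :=
  p ≠ 0 ∧ ∀ z : ℂ, Polynomial.aeval z p = 0 → z.im = 0

/-- Merge two lists alternately: `mergeAlt [a1,a2,...] [b1,b2,...] = [a1,b1,a2,b2,...]`. -/
def mergeAlt : List ℝ → List ℝ → List ℝ
  | [], l => l
  | a :: as, l => a :: mergeAlt l as
termination_by a b => a.length + b.length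
decreasing_by simp [List.length]; omega

/-- `AltSeq α β` : the alternation α₁ ≤ β₁ ≤ α₂ ≤ β₂ ≤ ⋯ holds (lengths differ by at
most one, starting with α). -/
def AltSeq (α β : List ℝ) : Prop :=
  (α.length = β.length ∨ α.length = β.length + 1) ∧
    List.Chain' (· ≤ ·) (mergeAlt α β)

/-- The zeros of two real polynomials interlace. -/
def ZerosInterlace (P Q : Polynomial ℝ) : Prop :=
  (P.degree ≤ 1 ∧ Q.degree ≤ 1) ∨
    ∃ α β : List ℝ, P.roots = ↑α ∧ Q.roots = ↑β ∧ (AltSeq α β ∨ AltSeq β α)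

/-- Evaluation of a bivariate polynomial `F ∈ ℂ[z][w]` at `(z, w)`. -/
def evalBiv (F : Polynomial (Polynomial ℂ)) (z w : ℂ) : ℂ :=
  (F.map (Polynomial.evalRingHom z)).eval w

/-- A bivariate polynomial is stable if it does not vanish when both coordinates are in
the open upper half-plane. -/
def BStable (F : Polynomial (Polynomial ℂ)) : Prop :=
  ∀ z w : ℂ, 0 < z.im → 0 < w.im → evalBiv F z w ≠ 0

/-- The canonical map `ℝ[z][w] → ℂ[z][w]`. -/
def bivToC (F : Polynomial (Polynomial ℝ)) : Polynomial (Polynomial ℂ) :=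
  F.map (Polynomial.mapRingHom (algebraMap ℝ ℂ))

/-- A real bivariate polynomial is (real) stable if its complexification is stable. -/
def RStableBiv (F : Polynomial (Polynomial ℝ)) : Prop := BStable (bivToC F)

/-- The extension of a linear operator `T` on `ℂ[z]` to `ℂ[z][w]` determined by
`T(z^k w^ℓ) = T(z^k) w^ℓ`. -/
def extT (T : Polynomial ℂ →ₗ[ℂ] Polynomial ℂ) (F : Polynomial (Polynomial ℂ)) :
    Polynomial (Polynomial ℂ) :=
  F.sum fun k c => Polynomial.C (T c) * Polynomial.X ^ k

/-- The extension of a linear operator `T` on `ℝ[z]` to `ℝ[z][w]` determined by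
`T(z^k w^ℓ) = T(z^k) w^ℓ`. -/
def extTR (T : Polynomial ℝ →ₗ[ℝ] Polynomial ℝ) (F : Polynomial (Polynomial ℝ)) :
    Polynomial (Polynomial ℝ) :=
  F.sum fun k c => Polynomial.C (T c) * Polynomial.X ^ k


/-- The real part of a complex polynomial (coefficientwise). -/
def rePoly (f : Polynomial ℂ) : Polynomial ℝ :=
  f.sum fun k c => Polynomial.C c.re * Polynomial.X ^ k

/-- The imaginary part of a complex polynomial (coefficientwise). -/
def imPoly (f : Polynomial ℂ) : Polynomial ℝ :=
  f.sum fun k c => Polynomial.C c.im * Polynomial.X ^ k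

/-- The extension by complex linearity of a real linear operator on `ℝ[z]` to
`ℂ[z] = ℝ[z] ⊕ iℝ[z]`. -/
def complexify (T : Polynomial ℝ →ₗ[ℝ] Polynomial ℝ) (f : Polynomial ℂ) :
    Polynomial ℂ :=
  (T (rePoly f)).map (algebraMap ℝ ℂ) +
    Complex.I • (T (imPoly f)).map (algebraMap ℝ ℂ)

/-!
For `z` in the upper half-plane compare `‖(Tf)(z)‖` with `‖(Tf)(z̄)‖` (`stabilityGap`).
Call a stable `f` lower-rooted if it also vanishes somewhere in the open lower half-plane.
By Hermite–Biehler, every nonzero real combination `l Re f + m Im f` of such an `f` is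
hyperbolic, because `‖f(z̄)‖ < ‖f(z)‖` on the upper half-plane. The gap of `f` at `z`
vanishes exactly when `T` sends one of these combinations to a polynomial vanishing at `z`,
so the gap never vanishes. Any two lower-rooted polynomials of degree at most `n` are joined
by a path of such polynomials: move every root linearly to `-i`, then pass from `(X + i)ᵈ`
to `(X + i)ⁿ` through `(X + i)ᵈ ((1 - t) + t (X + i))ⁿ⁻ᵈ`. The upper half-plane is
connected, so the gap has one sign for all lower-rooted `f` and all `z`: if it is positive,
`Tf` is stable; if it is negative, `Tf` has no zero in the lower half-plane. A stable `f`
that is not lower-rooted is a complex multiple of a hyperbolic polynomial, and so is `Tf`.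
Since `Hyperbolic` excludes `0`, the argument always ends in one of the first two
alternatives.
-/

open Complex ComplexConjugate

lemma coeff_rePoly (f : ℂ[X]) (k : ℕ) : (rePoly f).coeff k = (f.coeff k).re := by
  rw [rePoly, Polynomial.sum_def, finsetSum_coeff]
  simp_rw [coeff_C_mul_X_pow]
  rw [Finset.sum_ite_eq]
  split_ifs with h
  · rfl
  · simp [notMem_support_iff.mp h]

lemma coeff_imPoly (f : ℂ[X]) (k : ℕ) : (imPoly f).coeff k = (f.coeff k).im := by
  rw [imPoly, Polynomial.sum_def, finsetSum_coeff]
  simp_rw [coeff_C_mul_X_pow]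
  rw [Finset.sum_ite_eq]
  split_ifs with h
  · rfl
  · simp [notMem_support_iff.mp h]

lemma degree_rePoly_le (f : ℂ[X]) : (rePoly f).degree ≤ f.degree :=
  (degree_le_iff_coeff_zero _ _).mpr fun k hk => by
    simp [coeff_rePoly, coeff_eq_zero_of_degree_lt hk]

lemma degree_imPoly_le (f : ℂ[X]) : (imPoly f).degree ≤ f.degree :=
  (degree_le_iff_coeff_zero _ _).mpr fun k hk => by
    simp [coeff_imPoly, coeff_eq_zero_of_degree_lt hk]

lemma eval_complexify (T : ℝ[X] →ₗ[ℝ] ℝ[X]) (f : ℂ[X]) (z : ℂ) :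
    (complexify T f).eval z = aeval z (T (rePoly f)) + I * aeval z (T (imPoly f)) := by
  simp [complexify, eval_map_algebraMap]

lemma eval_conj_complexify (T : ℝ[X] →ₗ[ℝ] ℝ[X]) (f : ℂ[X]) (z : ℂ) :
    (complexify T f).eval (conj z) =
      conj (aeval z (T (rePoly f)) - I * aeval z (T (imPoly f))) := by
  simp [eval_complexify, aeval_conj]

lemma complexify_id (f : ℂ[X]) : complexify LinearMap.id f = f := by
  ext k
  simp [complexify, coeff_rePoly, coeff_imPoly, Complex.ext_iff]

lemma complexify_ofReal (T : ℝ[X] →ₗ[ℝ] ℝ[X]) (p : ℝ[X]) :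
    complexify T (p.map (algebraMap ℝ ℂ)) = (T p).map (algebraMap ℝ ℂ) := by
  have hre : rePoly (p.map (algebraMap ℝ ℂ)) = p := by ext k; simp [coeff_rePoly]
  have him : imPoly (p.map (algebraMap ℝ ℂ)) = 0 := by ext k; simp [coeff_imPoly]
  simp [complexify, hre, him]

lemma complexify_add (T : ℝ[X] →ₗ[ℝ] ℝ[X]) (f g : ℂ[X]) :
    complexify T (f + g) = complexify T f + complexify T g := by
  have hre : rePoly (f + g) = rePoly f + rePoly g := by ext k; simp [coeff_rePoly]
  have him : imPoly (f + g) = imPoly f + imPoly g := by ext k; simp [coeff_imPoly]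
  simp only [complexify, hre, him, map_add, Polynomial.map_add, smul_add]
  abel

lemma complexify_smul (T : ℝ[X] →ₗ[ℝ] ℝ[X]) (a : ℂ) (f : ℂ[X]) :
    complexify T (a • f) = a • complexify T f := by
  have hre : rePoly (a • f) = a.re • rePoly f - a.im • imPoly f := by
    ext k; simp [coeff_rePoly, coeff_imPoly]
  have him : imPoly (a • f) = a.re • imPoly f + a.im • rePoly f := by
    ext k; simp [coeff_rePoly, coeff_imPoly]
  apply Polynomial.funext
  intro z
  simp only [eval_complexify, hre, him, map_add, map_sub, map_smul, eval_smul, smul_eq_mul,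
    Complex.real_smul]
  conv_rhs => rw [← Complex.re_add_im a]
  linear_combination (-(a.im : ℂ) * aeval z (T (imPoly f))) * I_sq

def complexifyₗ (T : ℝ[X] →ₗ[ℝ] ℝ[X]) : ℂ[X] →ₗ[ℂ] ℂ[X] where
  toFun := complexify T
  map_add' := complexify_add T
  map_smul' := complexify_smul T

lemma norm_add_I_mul_eq_norm_sub_I_mul_iff (a b : ℂ) :
    ‖a + I * b‖ = ‖a - I * b‖ ↔ ∃ l m : ℝ, (l, m) ≠ 0 ∧ l * a + m * b = 0 := by
  have key : ‖a + I * b‖ = ‖a - I * b‖ ↔ a.im * b.re = a.re * b.im := by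
    rw [← sq_eq_sq₀ (norm_nonneg _) (norm_nonneg _), Complex.sq_norm, Complex.sq_norm,
      Complex.normSq_apply, Complex.normSq_apply]
    simp only [add_re, add_im, sub_re, sub_im, mul_re, mul_im, I_re, I_im]
    constructor <;> intro h <;> linarith
  simp only [key, Complex.ext_iff, add_re, add_im, mul_re, mul_im, ofReal_re, ofReal_im,
    zero_re, zero_im, ne_eq, Prod.ext_iff, Prod.fst_zero, Prod.snd_zero, not_and_or]
  constructor
  · intro h
    by_cases hb : b = 0
    · exact ⟨0, 1, by simp, by simp [hb]⟩
    · refine ⟨normSq b, -(a.re * b.re + a.im * b.im), Or.inl (by simpa using hb), ?_, ?_⟩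
      · rw [Complex.normSq_apply]; linear_combination (-b.im) * h
      · rw [Complex.normSq_apply]; linear_combination b.re * h
  · rintro ⟨l, m, hlm, hre, him⟩
    rcases hlm with hl | hm
    · exact (mul_right_inj' hl).mp (by linear_combination b.re * him - b.im * hre)
    · exact (mul_right_inj' hm).mp (by linear_combination a.im * hre - a.re * him)

lemma norm_eval_complexify_eq_iff (T : ℝ[X] →ₗ[ℝ] ℝ[X]) (f : ℂ[X]) (z : ℂ) :
    ‖(complexify T f).eval z‖ = ‖(complexify T f).eval (conj z)‖ ↔
      ∃ l m : ℝ, (l, m) ≠ 0 ∧ aeval z (T (l • rePoly f + m • imPoly f)) = 0 := by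
  rw [eval_conj_complexify, Complex.norm_conj, eval_complexify,
    norm_add_I_mul_eq_norm_sub_I_mul_iff]
  simp only [map_add, map_smul, Complex.real_smul]

lemma hyperbolic_of_aeval_ne_zero {p : ℝ[X]} (h : ∀ z : ℂ, 0 < z.im → aeval z p ≠ 0) :
    Hyperbolic p := by
  refine ⟨fun hp => h I (by simp) (by simp [hp]), fun z hz => ?_⟩
  rcases lt_trichotomy z.im 0 with hneg | hzero | hpos
  · exact absurd (by rw [aeval_conj, hz, map_zero]) (h (conj z) (by simpa using hneg))
  · exact hzero
  · exact absurd hz (h z hpos)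

lemma Hyperbolic.aeval_ne_zero {p : ℝ[X]} (hp : Hyperbolic p) {z : ℂ} (hz : z.im ≠ 0) :
    aeval z p ≠ 0 :=
  fun h => hz (hp.2 z h)

lemma UStable.ne_zero {f : ℂ[X]} (hf : UStable f) : f ≠ 0 :=
  fun h => hf I (by simp) (by simp [h])

lemma UStable.im_nonpos {f : ℂ[X]} (hf : UStable f) {ρ : ℂ} (hρ : f.eval ρ = 0) :
    ρ.im ≤ 0 :=
  not_lt.mp fun h => hf ρ h hρ

lemma uStable_multiset_prod_X_sub_C {s : Multiset ℂ} (hs : ∀ ρ ∈ s, ρ.im ≤ 0) :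
    UStable (s.map fun ρ => X - C ρ).prod := by
  intro z hz
  rw [eval_multiset_prod, Multiset.map_map]
  refine Multiset.prod_ne_zero fun h => ?_
  obtain ⟨ρ, hρ, h⟩ := Multiset.mem_map.mp h
  have : z = ρ := by simpa [sub_eq_zero, eq_comm] using h
  linarith [hs ρ hρ, congrArg Complex.im this]

lemma norm_conj_sub_sq (z ρ : ℂ) :
    ‖conj z - ρ‖ ^ 2 = ‖z - ρ‖ ^ 2 + 4 * z.im * ρ.im := by
  simp only [Complex.sq_norm, Complex.normSq_apply, sub_re, sub_im, conj_re, conj_im]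
  ring

lemma norm_eval_eq_prod_roots (f : ℂ[X]) (z : ℂ) :
    ‖f.eval z‖ = ‖f.leadingCoeff‖ * (f.roots.map fun ρ => ‖z - ρ‖).prod := by
  conv_lhs => rw [← C_leadingCoeff_mul_prod_multiset_X_sub_C
    (splits_iff_card_roots.mp (IsAlgClosed.splits f))]
  simp only [eval_mul, eval_C, eval_multiset_prod, Multiset.map_map, norm_mul]
  congr 1
  exact (map_multiset_prod (normHom : ℂ →*₀ ℝ) _).trans (by simp [Multiset.map_map])

def LowerRooted (f : ℂ[X]) : Prop :=
  UStable f ∧ ∃ ρ : ℂ, ρ.im < 0 ∧ f.eval ρ = 0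

lemma LowerRooted.norm_eval_conj_lt {f : ℂ[X]} (hf : LowerRooted f) {z : ℂ} (hz : 0 < z.im) :
    ‖f.eval (conj z)‖ < ‖f.eval z‖ := by
  obtain ⟨hst, ρ₀, hρ₀, hfρ₀⟩ := hf
  have hf0 := hst.ne_zero
  obtain ⟨s, hs⟩ := Multiset.exists_cons_of_mem ((mem_roots hf0).mpr hfρ₀)
  have him : ∀ ρ ∈ s, ρ.im ≤ 0 := fun ρ hρ =>
    hst.im_nonpos ((mem_roots hf0).mp (hs ▸ Multiset.mem_cons_of_mem hρ))
  have hle : ∀ ρ : ℂ, ρ.im ≤ 0 → ‖conj z - ρ‖ ≤ ‖z - ρ‖ := fun ρ hρ =>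
    (pow_le_pow_iff_left₀ (norm_nonneg _) (norm_nonneg _) two_ne_zero).mp
      (by rw [norm_conj_sub_sq]; nlinarith)
  have hlt : ‖conj z - ρ₀‖ < ‖z - ρ₀‖ :=
    (pow_lt_pow_iff_left₀ (norm_nonneg _) (norm_nonneg _) two_ne_zero).mp
      (by rw [norm_conj_sub_sq]; nlinarith)
  have hpos : 0 < (s.map fun ρ => ‖z - ρ‖).prod :=
    Multiset.prod_pos fun x hx => by
      obtain ⟨ρ, hρ, rfl⟩ := Multiset.mem_map.mp hx
      exact norm_pos_iff.mpr (sub_ne_zero.mpr fun h => by linarith [him ρ hρ, congrArg im h])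
  rw [norm_eval_eq_prod_roots, norm_eval_eq_prod_roots, hs, Multiset.map_cons,
    Multiset.map_cons, Multiset.prod_cons, Multiset.prod_cons]
  refine mul_lt_mul_of_pos_left ?_ (norm_pos_iff.mpr (leadingCoeff_ne_zero.mpr hf0))
  calc ‖conj z - ρ₀‖ * (s.map fun ρ => ‖conj z - ρ‖).prod
      ≤ ‖conj z - ρ₀‖ * (s.map fun ρ => ‖z - ρ‖).prod :=
        mul_le_mul_of_nonneg_left (Multiset.prod_map_le_prod_map₀ _ _
          (fun _ _ => norm_nonneg _) fun ρ hρ => hle ρ (him ρ hρ)) (norm_nonneg _)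
    _ < ‖z - ρ₀‖ * (s.map fun ρ => ‖z - ρ‖).prod := mul_lt_mul_of_pos_right hlt hpos

lemma LowerRooted.hyperbolic_pencil {f : ℂ[X]} (hf : LowerRooted f) {l m : ℝ}
    (hlm : (l, m) ≠ 0) :
    Hyperbolic (l • rePoly f + m • imPoly f) := by
  refine hyperbolic_of_aeval_ne_zero fun z hz hzero => (hf.norm_eval_conj_lt hz).ne' ?_
  have := (norm_eval_complexify_eq_iff LinearMap.id f z).mpr ⟨l, m, hlm, hzero⟩
  rwa [complexify_id] at this

lemma degree_pencil_le (f : ℂ[X]) (l m : ℝ) :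
    (l • rePoly f + m • imPoly f).degree ≤ f.degree :=
  (degree_add_le _ _).trans <| max_le ((degree_smul_le _ _).trans (degree_rePoly_le f))
    ((degree_smul_le _ _).trans (degree_imPoly_le f))

lemma IsPreconnected.pos_iff_pos_of_ne_zero {α : Type*} [TopologicalSpace α] {s : Set α}
    (hs : IsPreconnected s) {g : α → ℝ} (hg : ContinuousOn g s) (h0 : ∀ x ∈ s, g x ≠ 0)
    {x y : α} (hx : x ∈ s) (hy : y ∈ s) : 0 < g x ↔ 0 < g y := by
  suffices ∀ {x y}, x ∈ s → y ∈ s → 0 < g x → 0 < g y from ⟨this hx hy, this hy hx⟩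
  intro x y hx hy hgx
  by_contra! hgy
  obtain ⟨w, hw, hgw⟩ := hs.intermediate_value hy hx hg ⟨hgy, hgx.le⟩
  exact h0 w hw hgw

def CoeffContinuous (γ : ℝ → ℂ[X]) : Prop :=
  ∀ k, Continuous fun t => (γ t).coeff k

namespace CoeffContinuous

lemma const (p : ℂ[X]) : CoeffContinuous fun _ => p :=
  fun _ => continuous_const

lemma C {c : ℝ → ℂ} (hc : Continuous c) : CoeffContinuous fun t => C (c t) := by
  intro k
  simp only [coeff_C]
  split_ifs
  · exact hc
  · exact continuous_const

lemma add {γ δ : ℝ → ℂ[X]} (hγ : CoeffContinuous γ) (hδ : CoeffContinuous δ) :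
    CoeffContinuous fun t => γ t + δ t :=
  fun k => by simp only [coeff_add]; exact (hγ k).add (hδ k)

lemma sub {γ δ : ℝ → ℂ[X]} (hγ : CoeffContinuous γ) (hδ : CoeffContinuous δ) :
    CoeffContinuous fun t => γ t - δ t :=
  fun k => by simp only [coeff_sub]; exact (hγ k).sub (hδ k)

lemma mul {γ δ : ℝ → ℂ[X]} (hγ : CoeffContinuous γ) (hδ : CoeffContinuous δ) :
    CoeffContinuous fun t => γ t * δ t :=
  fun k => by
    simp only [coeff_mul]
    exact continuous_finsetSum _ fun x _ => (hγ x.1).mul (hδ x.2)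

lemma pow {γ : ℝ → ℂ[X]} (hγ : CoeffContinuous γ) (d : ℕ) :
    CoeffContinuous fun t => γ t ^ d := by
  induction d with
  | zero => simpa using const 1
  | succ d ih => simpa only [pow_succ] using ih.mul hγ

lemma multiset_prod {ι : Type*} (s : Multiset ι) {γ : ι → ℝ → ℂ[X]}
    (hγ : ∀ i ∈ s, CoeffContinuous (γ i)) :
    CoeffContinuous fun t => (s.map fun i => γ i t).prod := by
  induction s using Multiset.induction_on with
  | empty => simpa using const 1
  | cons i s ih =>
    simp only [Multiset.map_cons, Multiset.prod_cons]
    exact (hγ i (Multiset.mem_cons_self i s)).mul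
      (ih fun j hj => hγ j (Multiset.mem_cons_of_mem hj))

end CoeffContinuous

def stabilityGap (T : ℝ[X] →ₗ[ℝ] ℝ[X]) (f : ℂ[X]) (z : ℂ) : ℝ :=
  ‖(complexify T f).eval z‖ - ‖(complexify T f).eval (conj z)‖

lemma continuous_stabilityGap (T : ℝ[X] →ₗ[ℝ] ℝ[X]) (f : ℂ[X]) :
    Continuous (stabilityGap T f) := by
  unfold stabilityGap
  fun_prop

lemma continuous_eval_complexify (T : ℝ[X] →ₗ[ℝ] ℝ[X]) {γ : ℝ → ℂ[X]}
    (hγ : CoeffContinuous γ)     {N : ℕ} (hN : ∀ t, (γ t).degree ≤ N) (z : ℂ) :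
    Continuous fun t => (complexify T (γ t)).eval z := by
  have hsum : ∀ t, (complexify T (γ t)).eval z =
      ∑ k ∈ Finset.range (N + 1), (γ t).coeff k * (complexify T (X ^ k)).eval z := by
    intro t
    have h := as_sum_range' (γ t) (N + 1)
      (Nat.lt_succ_of_le (natDegree_le_iff_degree_le.mpr (hN t)))
    simp_rw [← smul_X_eq_monomial] at h
    conv_lhs => rw [h]
    change (complexifyₗ T _).eval z = _
    simp [map_sum, map_smul, eval_finsetSum, complexifyₗ]
  simp_rw [hsum]
  exact continuous_finsetSum _ fun k _ => (hγ k).mul continuous_const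

lemma continuous_stabilityGap_path (T : ℝ[X] →ₗ[ℝ] ℝ[X]) {γ : ℝ → ℂ[X]}
    (hγ : CoeffContinuous γ)     {N : ℕ} (hN : ∀ t, (γ t).degree ≤ N) (z : ℂ) :
    Continuous fun t => stabilityGap T (γ t) z :=
  ((continuous_eval_complexify T hγ hN z).norm).sub (continuous_eval_complexify T hγ hN _).norm

lemma stabilityGap_smul (T : ℝ[X] →ₗ[ℝ] ℝ[X]) (c : ℂ) (f : ℂ[X]) (z : ℂ) :
    stabilityGap T (c • f) z = ‖c‖ * stabilityGap T f z := by
  simp only [stabilityGap, complexify_smul, eval_smul, smul_eq_mul, norm_mul]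
  ring

lemma eval_complexify_ne_zero_of_stabilityGap_pos {T : ℝ[X] →ₗ[ℝ] ℝ[X]} {f : ℂ[X]}
    {z : ℂ}     (h : 0 < stabilityGap T f z) : (complexify T f).eval z ≠ 0 :=
  fun h0 => by
    simp only [stabilityGap, h0, norm_zero] at h
    linarith [norm_nonneg ((complexify T f).eval (conj z))]

lemma eval_complexify_conj_ne_zero_of_stabilityGap_neg {T : ℝ[X] →ₗ[ℝ] ℝ[X]} {f : ℂ[X]}
    {z : ℂ}     (h : stabilityGap T f z < 0) : (complexify T f).eval (conj z) ≠ 0 :=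
  fun h0 => by
    simp only [stabilityGap, h0, norm_zero] at h
    linarith [norm_nonneg ((complexify T f).eval z)]

def HyperbolicityPreserving (n : ℕ) (T : ℝ[X] →ₗ[ℝ] ℝ[X]) : Prop :=
  ∀ f : ℝ[X], f.degree ≤ n → Hyperbolic f → Hyperbolic (T f)

section

variable {n : ℕ} {T : ℝ[X] →ₗ[ℝ] ℝ[X]}

lemma HyperbolicityPreserving.stabilityGap_ne_zero (hT : HyperbolicityPreserving n T) {f : ℂ[X]}
    (hf : LowerRooted f) (hfn : f.degree ≤ n) {z : ℂ} (hz : 0 < z.im) :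
    stabilityGap T f z ≠ 0 := by
  intro hgap
  obtain ⟨l, m, hlm, hzero⟩ := (norm_eval_complexify_eq_iff T f z).mp (sub_eq_zero.mp hgap)
  exact (hT _ ((degree_pencil_le f l m).trans hfn) (hf.hyperbolic_pencil hlm)).aeval_ne_zero
    hz.ne' hzero

lemma HyperbolicityPreserving.pos_stabilityGap_iff_of_im_pos (hT : HyperbolicityPreserving n T)
    {f : ℂ[X]} (hf : LowerRooted f) (hfn : f.degree ≤ n) {z w : ℂ} (hz : 0 < z.im)
    (hw : 0 < w.im) : 0 < stabilityGap T f z ↔ 0 < stabilityGap T f w :=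
  (convex_halfSpace_im_gt 0).isPreconnected.pos_iff_pos_of_ne_zero
    (continuous_stabilityGap T f).continuousOn (fun _ hz => hT.stabilityGap_ne_zero hf hfn hz) hz hw

lemma HyperbolicityPreserving.pos_stabilityGap_iff_of_path (hT : HyperbolicityPreserving n T)
    {γ : ℝ → ℂ[X]} (hγ : CoeffContinuous γ) (hγn : ∀ t, (γ t).degree ≤ n)
    (hγl : ∀ t ∈ Set.Icc (0 : ℝ) 1, LowerRooted (γ t)) {z : ℂ} (hz : 0 < z.im) :
    0 < stabilityGap T (γ 0) z ↔ 0 < stabilityGap T (γ 1) z :=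
  isPreconnected_Icc.pos_iff_pos_of_ne_zero (g := fun t => stabilityGap T (γ t) z)
    (continuous_stabilityGap_path T hγ hγn z).continuousOn
    (fun t ht => hT.stabilityGap_ne_zero (hγl t ht) (hγn t) hz)
    (Set.left_mem_Icc.mpr zero_le_one) (Set.right_mem_Icc.mpr zero_le_one)

lemma HyperbolicityPreserving.pos_stabilityGap_iff_X_add_C_I_pow
    (hT : HyperbolicityPreserving n T) {f : ℂ[X]} (hf : LowerRooted f) (hfn : f.degree ≤ n) :
    0 < stabilityGap T f I ↔ 0 < stabilityGap T ((X + C I) ^ f.natDegree) I := by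
  obtain ⟨hst, ρ₀, hρ₀, hfρ₀⟩ := hf
  have hf0 := hst.ne_zero
  have hcard := splits_iff_card_roots.mp (IsAlgClosed.splits f)
  let rootAt : ℝ → ℂ → ℂ := fun t ρ => (1 - (t : ℂ)) * ρ - t * I
  let γ : ℝ → ℂ[X] := fun t => ((f.roots.map (rootAt t)).map fun ρ => X - C ρ).prod
  have hγ0 : f = f.leadingCoeff • γ 0 := by
    simp [γ, rootAt, smul_eq_C_mul, C_leadingCoeff_mul_prod_multiset_X_sub_C hcard]
  have hγ1 : γ 1 = (X + C I) ^ f.natDegree := by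
    simp [γ, rootAt, Multiset.map_const', hcard]
  have hγ : CoeffContinuous γ := by
    simp only [γ, Multiset.map_map, Function.comp_def]
    exact CoeffContinuous.multiset_prod _ fun ρ _ =>
      (CoeffContinuous.const X).sub (CoeffContinuous.C (by fun_prop))
  have hγn : ∀ t, (γ t).degree ≤ n := fun t => by
    refine degree_le_natDegree.trans ?_
    rw [natDegree_multiset_prod_X_sub_C_eq_card, Multiset.card_map, hcard]
    exact_mod_cast natDegree_le_iff_degree_le.mpr hfn
  have hγl : ∀ t ∈ Set.Icc (0 : ℝ) 1, LowerRooted (γ t) := by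
    rintro t ⟨ht0, ht1⟩
    have him : ∀ ρ : ℂ, (rootAt t ρ).im = (1 - t) * ρ.im - t := fun ρ => by
      simp [rootAt]
    refine ⟨uStable_multiset_prod_X_sub_C fun ρ' hρ' => ?_, rootAt t ρ₀, ?_, ?_⟩
    · obtain ⟨ρ, hρ, rfl⟩ := Multiset.mem_map.mp hρ'
      have := hst.im_nonpos ((mem_roots hf0).mp hρ)
      rw [him ρ]
      nlinarith
    · rw [him ρ₀]
      rcases ht0.eq_or_lt with rfl | ht0
      · simpa using hρ₀
      · nlinarith
    · rw [eval_multiset_prod]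
      refine Multiset.prod_eq_zero (Multiset.mem_map.mpr ⟨X - C (rootAt t ρ₀), ?_, by simp⟩)
      exact Multiset.mem_map_of_mem _ (Multiset.mem_map_of_mem _ ((mem_roots hf0).mpr hfρ₀))
  have hlc : 0 < ‖f.leadingCoeff‖ := norm_pos_iff.mpr (leadingCoeff_ne_zero.mpr hf0)
  rw [← hγ1, ← hT.pos_stabilityGap_iff_of_path hγ hγn hγl (by simp)]
  conv_lhs => rw [hγ0, stabilityGap_smul]
  exact mul_pos_iff_of_pos_left hlc

lemma HyperbolicityPreserving.pos_stabilityGap_X_add_C_I_pow_iff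
    (hT : HyperbolicityPreserving n T) {d : ℕ} (hd : 1 ≤ d) (hdn : d ≤ n) :
    0 < stabilityGap T ((X + C I) ^ d) I ↔ 0 < stabilityGap T ((X + C I) ^ n) I := by
  let γ : ℝ → ℂ[X] := fun t =>
    (X + C I) ^ d * (C (1 - (t : ℂ)) + C (t : ℂ) * (X + C I)) ^ (n - d)
  have hγ0 : γ 0 = (X + C I) ^ d := by simp [γ]
  have hγ1 : γ 1 = (X + C I) ^ n := by simp [γ, ← pow_add, Nat.add_sub_cancel' hdn]
  have hγ : CoeffContinuous γ :=
    ((CoeffContinuous.const _).pow d).mul (((CoeffContinuous.C (by fun_prop)).add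
      ((CoeffContinuous.C (by fun_prop)).mul (CoeffContinuous.const _))).pow _)
  have hγn : ∀ t, (γ t).degree ≤ n := fun t => by
    refine degree_le_of_natDegree_le ?_
    have : (γ t).natDegree ≤ d + (n - d) := by
      simp only [γ]
      compute_degree
    omega
  have hγl : ∀ t ∈ Set.Icc (0 : ℝ) 1, LowerRooted (γ t) := by
    rintro t ⟨ht0, -⟩
    refine ⟨fun z hz => ?_, -I, by simp, by simp [γ, zero_pow (by omega : d ≠ 0)]⟩
    have hzI : z + I ≠ 0 := fun h => by
      have : z.im + 1 = 0 := by simpa using congrArg im h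
      linarith
    have hfac : 1 - (t : ℂ) + t * (z + I) ≠ 0 := fun h => by
      have him : t * (z.im + 1) = 0 := by simpa using congrArg im h
      obtain rfl : t = 0 := by nlinarith
      simp at h
    simpa [γ] using mul_ne_zero (pow_ne_zero d hzI) (pow_ne_zero (n - d) hfac)
  rw [← hγ0, ← hγ1]
  exact hT.pos_stabilityGap_iff_of_path hγ hγn hγl (by simp)

lemma UStable.exists_hyperbolic_of_not_lowerRooted {f : ℂ[X]} (hf : UStable f)
    (hlow : ¬LowerRooted f) :
    ∃ r : ℝ[X], Hyperbolic r ∧ r.degree = f.degree ∧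
      f = f.leadingCoeff • r.map (algebraMap ℝ ℂ) := by
  have hf0 := hf.ne_zero
  have hcard := splits_iff_card_roots.mp (IsAlgClosed.splits f)
  have hreal : ∀ ρ ∈ f.roots, (ρ.re : ℂ) = ρ := fun ρ hρ => by
    have hρ' := (mem_roots hf0).mp hρ
    have him : ρ.im = 0 :=
      (hf.im_nonpos hρ').antisymm (not_lt.mp fun h => hlow ⟨hf, ρ, h, hρ'⟩)
    exact Complex.ext rfl (by simp [him])
  let r : ℝ[X] := (f.roots.map fun ρ => X - C ρ.re).prod
  have hr : r.map (algebraMap ℝ ℂ) = (f.roots.map fun ρ => X - C ρ).prod := by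
    simp only [r, Polynomial.map_multiset_prod, Multiset.map_map, Function.comp_def,
      Polynomial.map_sub, map_X, map_C]
    exact congrArg _ (Multiset.map_congr rfl fun ρ hρ => by rw [← hreal ρ hρ]; rfl)
  have hfr : f = f.leadingCoeff • r.map (algebraMap ℝ ℂ) := by
    rw [hr, smul_eq_C_mul, C_leadingCoeff_mul_prod_multiset_X_sub_C hcard]
  refine ⟨r, hyperbolic_of_aeval_ne_zero fun z hz hrz => hf z hz ?_, ?_, hfr⟩
  · rw [hfr, eval_smul, eval_map_algebraMap, hrz, smul_zero]
  · conv_rhs => rw [hfr, smul_eq_C_mul, degree_C_mul (leadingCoeff_ne_zero.mpr hf0), degree_map]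

lemma HyperbolicityPreserving.eval_complexify_ne_zero_of_not_lowerRooted
    (hT : HyperbolicityPreserving n T) {f : ℂ[X]} (hf : UStable f) (hfn : f.degree ≤ n)
    (hlow : ¬LowerRooted f) {z : ℂ} (hz : z.im ≠ 0) :
    (complexify T f).eval z ≠ 0 := by
  obtain ⟨r, hr, hrf, hfr⟩ := hf.exists_hyperbolic_of_not_lowerRooted hlow
  rw [hfr, complexify_smul, complexify_ofReal, eval_smul, eval_map_algebraMap, smul_eq_mul]
  exact mul_ne_zero (leadingCoeff_ne_zero.mpr hf.ne_zero)
    ((hT r (hrf ▸ hfn) hr).aeval_ne_zero hz)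

lemma LowerRooted.natDegree_pos {f : ℂ[X]} (hf : LowerRooted f) : 0 < f.natDegree :=
  let ⟨hst, _, _, hρ⟩ := hf
  natDegree_pos_of_eval₂_root hst.ne_zero (RingHom.id ℂ) hρ fun _ h => h

lemma HyperbolicityPreserving.pos_stabilityGap_iff (hT : HyperbolicityPreserving n T)
    {f g : ℂ[X]} (hf : LowerRooted f) (hfn : f.degree ≤ n) (hg : LowerRooted g)
    (hgn : g.degree ≤ n) {z w : ℂ} (hz : 0 < z.im) (hw : 0 < w.im) :
    0 < stabilityGap T f z ↔ 0 < stabilityGap T g w := by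
  have hI : (0 : ℝ) < I.im := by simp
  have hcanonical : ∀ {f : ℂ[X]}, LowerRooted f → f.degree ≤ n →
      (0 < stabilityGap T f I ↔ 0 < stabilityGap T ((X + C I) ^ n) I) := fun hf hfn =>
    (hT.pos_stabilityGap_iff_X_add_C_I_pow hf hfn).trans
      (hT.pos_stabilityGap_X_add_C_I_pow_iff hf.natDegree_pos (natDegree_le_iff_degree_le.mpr hfn))
  rw [hT.pos_stabilityGap_iff_of_im_pos hf hfn hz hI,
    hT.pos_stabilityGap_iff_of_im_pos hg hgn hw hI,     hcanonical hf hfn, hcanonical hg hgn]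

lemma HyperbolicityPreserving.stabilityGap_pos_or_neg (hT : HyperbolicityPreserving n T) :
    (∀ f : ℂ[X], f.degree ≤ n → LowerRooted f → ∀ z : ℂ, 0 < z.im →
      0 < stabilityGap T f z) ∨
    (∀ f : ℂ[X], f.degree ≤ n → LowerRooted f → ∀ z : ℂ, 0 < z.im →
      stabilityGap T f z < 0) := by
  have hI : (0 : ℝ) < I.im := by simp
  by_cases h : ∃ g : ℂ[X], g.degree ≤ n ∧ LowerRooted g ∧ stabilityGap T g I < 0
  · obtain ⟨g, hgn, hg, hgI⟩ := h
    refine Or.inr fun f hfn hf z hz => (not_lt.mp fun hfz => hgI.not_gt ?_).lt_of_ne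
      (hT.stabilityGap_ne_zero hf hfn hz)
    exact (hT.pos_stabilityGap_iff hf hfn hg hgn hz hI).mp hfz
  · simp only [not_exists, not_and, not_lt] at h
    refine Or.inl fun f hfn hf z hz => (hT.pos_stabilityGap_iff_of_im_pos hf hfn hI hz).mp ?_
    exact (h f hfn hf).lt_of_ne (hT.stabilityGap_ne_zero hf hfn hI).symm

end

/-- **Lemma (trichotomy).** If `T : ℝ_n[z] → ℝ[z]` maps every hyperbolic polynomial of
degree at most `n` to a hyperbolic polynomial then (extending `T` by complex
linearity) either `T` maps every stable polynomial of degree at most `n` to a stable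
polynomial or `0`, or `T` maps every such stable polynomial into `H₁⁻(ℂ) ∪ {0}`, or
`T` has range of dimension at most two and `T(f) = α(f)P + β(f)Q` with `α, β` linear
functionals and `P, Q` hyperbolic with interlacing zeros. -/
theorem stmt_16 (n : ℕ) (T : Polynomial ℝ →ₗ[ℝ] Polynomial ℝ)
    (hT : ∀ f : Polynomial ℝ, f.degree ≤ (n : WithBot ℕ) → Hyperbolic f →
      Hyperbolic (T f)) :
    (∀ f : Polynomial ℂ, f.degree ≤ (n : WithBot ℕ) → UStable f →
      (UStable (complexify T f) ∨ complexify T f = 0)) ∨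
    (∀ f : Polynomial ℂ, f.degree ≤ (n : WithBot ℕ) → UStable f →
      ((∀ z : ℂ, z.im < 0 → (complexify T f).eval z ≠ 0) ∨ complexify T f = 0)) ∨
    (∃ (α β : Polynomial ℝ →ₗ[ℝ] ℝ) (P Q : Polynomial ℝ),
      Hyperbolic P ∧ Hyperbolic Q ∧ ZerosInterlace P Q ∧
      ∀ f : Polynomial ℝ, f.degree ≤ (n : WithBot ℕ) → T f = α f • P + β f • Q) := by
  have hT : HyperbolicityPreserving n T := hT
  rcases hT.stabilityGap_pos_or_neg with hpos | hneg
  · refine Or.inl fun f hfn hf => Or.inl fun z hz => ?_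
    by_cases hlow : LowerRooted f
    · exact eval_complexify_ne_zero_of_stabilityGap_pos (hpos f hfn hlow z hz)
    · exact hT.eval_complexify_ne_zero_of_not_lowerRooted hf hfn hlow hz.ne'
  · refine Or.inr (Or.inl fun f hfn hf => Or.inl fun z hz => ?_)
    by_cases hlow : LowerRooted f
    · simpa using eval_complexify_conj_ne_zero_of_stabilityGap_neg
        (hneg f hfn hlow (conj z) (by simpa using hz))
    · exact hT.eval_complexify_ne_zero_of_not_lowerRooted hf hfn hlow hz.ne
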